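/- arXiv:2206.06148 — 2 statements merged into one kernel-verified Lean document; each statement's English description precedes it below -/
import Mathlib

section
/- Let k ≥ 1 and let p_1 ≤ p_2 ≤ … ≤ p_k be integers with p_i ≥ 3 for every i. Then the combinatorial curvature condition 1 − k/2 + (1/p_1 + 1/p_2 + … + 1/p_k) = 0 holds (equivalently, (1/2 − 1/p_1) + … + (1/2 − 1/p_k) = 1) if and only if the tuple (p_1,…,p_k) is one of the following seventeen tuples: (3,7,42), (3,8,24), (3,9,18), (3,10,15), (3,12,12), (4,5,20), (4,6,12), (4,8,8), (5,5,10), (6,6,6), (3,3,4,12), (3,3,6,6), (3,4,4,6), (4,4,4,4), (3,3,3,3,6), (3,3,3,4,4), (3,3,3,3,3,3). -/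
/-!
A face with `p` sides meets a vertex at the angle `1/2 - 1/p` of a full turn (the interior angle
of a regular `p`-gon), so zero curvature says that these corner angles add up to `1`. Every
corner angle is at least `1/6` and below `1/2`, so there are between three and six faces. In a
sorted list the first entry has the smallest angle, so `k` faces with angle sum `r` force
`p₁ ≤ 2k / (k - 2r)`; fixing `p₁` and recursing on the rest gives a finite search, which a
kernel computation carries out.
-/

def cornerAngle (p : ℕ) : ℚ := 1 / 2 - 1 / p

theorem sum_map_cornerAngle (l : List ℕ) :
    (l.map cornerAngle).sum = l.length / 2 - (l.map fun p => (1 : ℚ) / (p : ℚ)).sum := by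
  induction l with
  | nil => simp
  | cons p l ih =>
    -- `l` is coerced to `List ℚ` by a monadic map here, hence `List.bind_eq_flatMap`.
    simp only [List.map_cons, cornerAngle, one_div, List.sum_cons, ih, List.pure_def,
      List.bind_eq_flatMap, List.length_cons, Nat.cast_add, Nat.cast_one, List.flatMap_cons,
      List.cons_append, List.nil_append]
    ring

theorem cornerAngle_le_cornerAngle {p q : ℕ} (hp : 0 < p) (hpq : p ≤ q) :
    cornerAngle p ≤ cornerAngle q := by
  unfold cornerAngle
  gcongr

theorem cornerAngle_lt_half {p : ℕ} (hp : 0 < p) : cornerAngle p < 1 / 2 := by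
  unfold cornerAngle
  have : (0 : ℚ) < p := by exact_mod_cast hp
  linarith [one_div_pos.mpr this]

theorem length_mul_cornerAngle_le_sum {a : ℕ} {l : List ℕ} (ha : 0 < a)
    (hsorted : (a :: l).Pairwise (· ≤ ·)) :
    ((a :: l).length : ℚ) * cornerAngle a ≤ ((a :: l).map cornerAngle).sum := by
  have hmin : ∀ x ∈ (a :: l).map cornerAngle, cornerAngle a ≤ x := by
    simp only [List.mem_map, List.mem_cons]
    rintro _ ⟨p, rfl | hp, rfl⟩
    · rfl
    · exact cornerAngle_le_cornerAngle ha (List.rel_of_pairwise_cons hsorted hp)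
  simpa using List.card_nsmul_le_sum _ _ hmin

theorem two_mul_sum_cornerAngle_lt_length {a : ℕ} {l : List ℕ} (hpos : ∀ p ∈ a :: l, 0 < p) :
    2 * ((a :: l).map cornerAngle).sum < (a :: l).length := by
  have hhalf : ∀ x ∈ l.map cornerAngle, x ≤ 1 / 2 := by
    simp only [List.mem_map]
    rintro _ ⟨p, hp, rfl⟩
    exact (cornerAngle_lt_half (hpos p (List.mem_cons_of_mem a hp))).le
  have htail := List.sum_le_card_nsmul _ _ hhalf
  have hhead := cornerAngle_lt_half (hpos a List.mem_cons_self)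
  simp only [List.length_map, nsmul_eq_mul] at htail
  simp only [List.map_cons, List.sum_cons, List.length_cons]
  push_cast
  linarith

theorem le_div_of_mul_cornerAngle_le {n a : ℕ} {r : ℚ} (ha : 0 < a) (hr : 2 * r < n)
    (h : n * cornerAngle a ≤ r) : (a : ℚ) ≤ 2 * n / (n - 2 * r) := by
  have ha' : (0 : ℚ) < a := by exact_mod_cast ha
  rw [le_div_iff₀ (by linarith)]
  have h2a : (n : ℚ) * a - 2 * n ≤ 2 * r * a := by
    have := mul_le_mul_of_nonneg_right h (by positivity : (0 : ℚ) ≤ 2 * a)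
    unfold cornerAngle at this
    field_simp at this
    linarith
  linarith

/-- A superset of the nondecreasing lists of length `k`, with entries at least `m`, whose corner
angles sum to `r`: the first entry ranges up to the bound `2k / (k - 2r)`. -/
def angleCandidates : ℕ → ℕ → ℚ → List (List ℕ)
  | 0, _, r => if r = 0 then [[]] else []
  | k + 1, m, r =>
    (List.range' m (⌊2 * (k + 1) / (k + 1 - 2 * r)⌋₊ + 1 - m)).flatMap fun a =>
      (angleCandidates k a (r - cornerAngle a)).map (a :: ·)

theorem mem_angleCandidates {l : List ℕ} {m : ℕ} (hm : 0 < m) (hsorted : l.Pairwise (· ≤ ·))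
    (hge : ∀ p ∈ l, m ≤ p) : l ∈ angleCandidates l.length m (l.map cornerAngle).sum := by
  induction l generalizing m with
  | nil => simp [angleCandidates]
  | cons a l ih =>
    have ha : 0 < a := hm.trans_le (hge a List.mem_cons_self)
    have hbound : (a : ℚ) ≤
        2 * (l.length + 1) / (l.length + 1 - 2 * ((a :: l).map cornerAngle).sum) := by
      simpa using le_div_of_mul_cornerAngle_le ha
        (two_mul_sum_cornerAngle_lt_length fun p hp => hm.trans_le (hge p hp))
        (length_mul_cornerAngle_le_sum ha hsorted)
    have htail := ih ha (List.pairwise_cons.mp hsorted).2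
      fun p hp => List.rel_of_pairwise_cons hsorted hp
    simp only [List.length_cons, angleCandidates, List.mem_flatMap, List.mem_range'_1, List.mem_map]
    refine ⟨a, ⟨hge a List.mem_cons_self, ?_⟩, l, ?_, rfl⟩
    · have := Nat.le_floor hbound
      omega
    · simpa using htail

theorem length_le_six {l : List ℕ} (h3 : ∀ p ∈ l, 3 ≤ p) (hsum : (l.map cornerAngle).sum = 1) :
    l.length ≤ 6 := by
  have hsixth : ∀ x ∈ l.map cornerAngle, 1 / 6 ≤ x := by
    simp only [List.mem_map]
    rintro _ ⟨p, hp, rfl⟩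
    calc (1 / 6 : ℚ) = cornerAngle 3 := by norm_num [cornerAngle]
      _ ≤ cornerAngle p := cornerAngle_le_cornerAngle (by norm_num) (h3 p hp)
  have := List.card_nsmul_le_sum _ _ hsixth
  simp only [List.length_map, nsmul_eq_mul, hsum] at this
  have : (l.length : ℚ) ≤ 6 := by linarith
  exact_mod_cast this

theorem forall_mem_angleCandidates_three_one : ∀ k ≤ 6, ∀ l ∈ angleCandidates k 3 1,
    l ∈ [[3, 7, 42], [3, 8, 24], [3, 9, 18], [3, 10, 15], [3, 12, 12],
      [4, 5, 20], [4, 6, 12], [4, 8, 8], [5, 5, 10], [6, 6, 6],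
      [3, 3, 4, 12], [3, 3, 6, 6], [3, 4, 4, 6], [4, 4, 4, 4],
      [3, 3, 3, 3, 6], [3, 3, 3, 4, 4], [3, 3, 3, 3, 3, 3]] := by
  decide +kernel

theorem curvature_zero_tuples_general (l : List ℕ)
    (hsorted : l.Pairwise (· ≤ ·)) (h3 : ∀ p ∈ l, 3 ≤ p) :
    (1 - (l.length : ℚ) / 2 + (l.map fun p => (1 : ℚ) / (p : ℚ)).sum = 0) ↔
      l ∈ [[3, 7, 42], [3, 8, 24], [3, 9, 18], [3, 10, 15], [3, 12, 12],
           [4, 5, 20], [4, 6, 12], [4, 8, 8], [5, 5, 10], [6, 6, 6],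
           [3, 3, 4, 12], [3, 3, 6, 6], [3, 4, 4, 6], [4, 4, 4, 4],
           [3, 3, 3, 3, 6], [3, 3, 3, 4, 4], [3, 3, 3, 3, 3, 3]] := by
  have hcurv : 1 - (l.length : ℚ) / 2 + (l.map fun p => (1 : ℚ) / (p : ℚ)).sum = 0 ↔
      (l.map cornerAngle).sum = 1 := by
    rw [sum_map_cornerAngle]
    constructor <;> intro h <;> linarith
  rw [hcurv]
  constructor
  · intro hsum
    have hmem := mem_angleCandidates (by norm_num) hsorted h3
    rw [hsum] at hmem
    exact forall_mem_angleCandidates_three_one _ (length_le_six h3 hsum) l hmem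
  · intro hl
    fin_cases hl <;> norm_num [cornerAngle]

/-- Arithmetic content of Proposition 3.1: a nonempty nondecreasing list of integers
`p₁ ≤ p₂ ≤ … ≤ p_k`, each at least 3, satisfies the zero-curvature condition
`1 - k/2 + ∑ 1/pᵢ = 0` iff it is one of the seventeen listed tuples. -/
theorem curvature_zero_tuples (l : List ℕ) (hne : l ≠ [])
    (hsorted : l.Pairwise (· ≤ ·)) (h3 : ∀ p ∈ l, 3 ≤ p) :
    (1 - (l.length : ℚ) / 2 + (l.map fun p => (1 : ℚ) / (p : ℚ)).sum = 0) ↔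
      l ∈ [[3, 7, 42], [3, 8, 24], [3, 9, 18], [3, 10, 15], [3, 12, 12],
           [4, 5, 20], [4, 6, 12], [4, 8, 8], [5, 5, 10], [6, 6, 6],
           [3, 3, 4, 12], [3, 3, 6, 6], [3, 4, 4, 6], [4, 4, 4, 4],
           [3, 3, 3, 3, 6], [3, 3, 3, 4, 4], [3, 3, 3, 3, 3, 3]] :=
  curvature_zero_tuples_general l hsorted h3
end

section
/- Let G be the simple graph on vertex set {0,1,…,11} whose edge set is {0,1},{0,3},{0,5},{0,7},{1,2},{1,8},{1,10},{2,3},{2,8},{2,11},{3,4},{3,7},{4,5},{4,6},{4,9},{4,11},{5,6},{5,10},{5,11},{6,7},{6,9},{6,10},{7,8},{8,9},{9,10},{9,11},{10,11}. Then the characteristic polynomial of the adjacency matrix of G equals a^12 − 27a^10 − 20a^9 + 201a^8 + 192a^7 − 532a^6 − 552a^5 + 492a^4 + 560a^3 − 84a^2 − 192a − 44. -/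
open Polynomial SimpleGraph

/-- Edge list (each unordered edge listed once) of the graph `H7`. -/
def edgesH7 : List (Fin 12 × Fin 12) :=
  [(0, 1), (0, 3), (0, 5), (0, 7), (1, 2), (1, 8), (1, 10), (2, 3), (2, 8), (2, 11), (3, 4), (3, 7), (4, 5), (4, 6), (4, 9), (4, 11), (5, 6), (5, 10), (5, 11), (6, 7), (6, 9), (6, 10), (7, 8), (8, 9), (9, 10), (9, 11), (10, 11)]

/-- The simple graph on vertex set `Fin 12` with the given edge set. -/
def H7 : SimpleGraph (Fin 12) :=
  SimpleGraph.fromRel (fun i j => (i, j) ∈ edgesH7)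

instance : DecidableRel H7.Adj := fun a b =>
  inferInstanceAs (Decidable (a ≠ b ∧ ((a, b) ∈ edgesH7 ∨ (b, a) ∈ edgesH7)))

/-!
A monic polynomial of degree 12 is determined by its values at 12 points, so it suffices to
check `det (t • 1 - A) = p(t)` for `t = 6, …, 17`. Each determinant is computed by Gaussian
elimination over `ℚ`, justified by the Schur complement formula and evaluated by the kernel.
-/

namespace Matrix

variable {K : Type*} [Field K]

def schurComplementFirst {n : ℕ} (M : Matrix (Fin (n + 1)) (Fin (n + 1)) K) :
    Matrix (Fin n) (Fin n) K :=
  of fun i j => M i.succ j.succ - M i.succ 0 / M 0 0 * M 0 j.succ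

theorem det_eq_mul_det_schurComplementFirst {n : ℕ} (M : Matrix (Fin (n + 1)) (Fin (n + 1)) K)
    (h : M 0 0 ≠ 0) : M.det = M 0 0 * (schurComplementFirst M).det := by
  -- clear the first column below the pivot, then expand along it
  set B : Matrix (Fin (n + 1)) (Fin (n + 1)) K :=
    of fun i j => M i j + (Fin.cons 0 fun i => -(M i.succ 0 / M 0 0) : Fin (n + 1) → K) i * M 0 j
  have hB : B.det = M.det := det_eq_of_forall_row_eq_smul_add_const _ 0 rfl fun _ _ => rfl
  have hB0 : ∀ i : Fin n, B i.succ 0 = 0 := fun i => by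
    simp [B, div_mul_cancel₀ _ h]
  have hBsub : B.submatrix Fin.succ Fin.succ = schurComplementFirst M := by
    ext i j
    simp [B, schurComplementFirst, sub_eq_add_neg]
  rw [← hB, det_succ_column_zero, Fin.sum_univ_succ]
  simp [hB0, hBsub, B]

/-- Gaussian elimination without row exchanges; a vanishing pivot aborts with the value `0`. -/
def detGauss [DecidableEq K] : {n : ℕ} → Matrix (Fin n) (Fin n) K → K
  | 0, _ => 1
  | _ + 1, M => if M 0 0 = 0 then 0 else M 0 0 * detGauss (schurComplementFirst M)

theorem det_eq_detGauss [DecidableEq K] {n : ℕ} (M : Matrix (Fin n) (Fin n) K)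
    (h : detGauss M ≠ 0) : M.det = detGauss M := by
  induction n with
  | zero => simp [detGauss]
  | succ n ih =>
    have hpivot : M 0 0 ≠ 0 := fun h0 => h (by simp [detGauss, h0])
    rw [detGauss, if_neg hpivot] at h ⊢
    rw [det_eq_mul_det_schurComplementFirst M hpivot, ih _ (right_ne_zero_of_mul h)]

theorem det_eq_of_detGauss_map_eq {R : Type*} [CommRing R] [DecidableEq K] {f : R →+* K}
    (hf : Function.Injective f) {n : ℕ} {M : Matrix (Fin n) (Fin n) R} {d : R}
    (h : detGauss (M.map f) = f d) (hd : d ≠ 0) : M.det = d := by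
  apply hf
  have hne : detGauss (M.map f) ≠ 0 := by rwa [h, map_ne_zero_iff f hf]
  rw [RingHom.map_det, RingHom.mapMatrix_apply, det_eq_detGauss _ hne, h]

theorem charpoly_eq_of_det_eq_eval {R : Type*} [CommRing R] [IsDomain R] {n : Type*} [Fintype n]
    [DecidableEq n] (M : Matrix n n R) {p : R[X]} (hp : p.Monic)
    (hdeg : p.natDegree = Fintype.card n) (s : Finset R) (hs : s.card = Fintype.card n)
    (h : ∀ t ∈ s, (scalar n t - M).det = p.eval t) : M.charpoly = p :=
  Polynomial.eq_of_degree_le_of_eval_finset_eq s (by rw [charpoly_degree_eq_dim, hs])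
    (by rw [charpoly_degree_eq_dim, degree_eq_natDegree hp.ne_zero, hdeg])
    (by rw [(charpoly_monic M).leadingCoeff, hp.leadingCoeff])
    fun t ht => by rw [eval_charpoly, h t ht]

end Matrix

/-- The characteristic polynomial of the adjacency matrix of `H7`. -/
theorem charpoly_H7 :
    (H7.adjMatrix ℤ).charpoly =
      X ^ 12 - 27 * X ^ 10 - 20 * X ^ 9 + 201 * X ^ 8 + 192 * X ^ 7 - 532 * X ^ 6 - 552 * X ^ 5 + 492 * X ^ 4 + 560 * X ^ 3 - 84 * X ^ 2 - 192 * X - 44 := by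
  -- every vertex of `H7` has degree at most 5, so for `t ≥ 6` the matrix `t • 1 - A` is strictly
  -- diagonally dominant and no pivot of the elimination vanishes
  refine Matrix.charpoly_eq_of_det_eq_eval _ (by monicity!) (by compute_degree!)
    (Finset.Icc 6 17) rfl ?_
  simp only [eval_sub, eval_add, eval_mul, eval_pow, eval_X, eval_ofNat]
  intro t ht
  refine Matrix.det_eq_of_detGauss_map_eq (f := Int.castRingHom ℚ) Int.cast_injective ?_ ?_ <;>
    revert t <;> decide +kernel
end
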